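/- Let $\mu$ be a Borel probability measure on the space of polytopes $\mathcal{P}^n$ with bounded support and let $K$ be the macroid with $h_K = \int h_P \, \mu(dP)$. Then for every unit vector $u$, the support set $F(K, u)$ satisfies $h_{F(K,u)} = \int h_{F(P,u)} \, \mu(dP)$. -/

import Mathlib

open scoped Pointwise RealInnerProductSpace
open MeasureTheory

noncomputable section

/-- Support function of a set. -/
def sfnS {n : ℕ} (A : Set (EuclideanSpace ℝ (Fin n))) (u : EuclideanSpace ℝ (Fin n)) : ℝ :=
  sSup ((fun x => ⟪x, u⟫) '' A)

/-- Support function of a convex body. -/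
def sfn {n : ℕ} (K : ConvexBody (EuclideanSpace ℝ (Fin n))) (u : EuclideanSpace ℝ (Fin n)) : ℝ :=
  sfnS (K : Set (EuclideanSpace ℝ (Fin n))) u

/-- The support set `F(K, u)` of a convex body `K` in direction `u`. -/
def suppSet {n : ℕ} (K : ConvexBody (EuclideanSpace ℝ (Fin n))) (u : EuclideanSpace ℝ (Fin n)) :
    Set (EuclideanSpace ℝ (Fin n)) :=
  {x ∈ (K : Set (EuclideanSpace ℝ (Fin n))) | ⟪x, u⟫ = sfn K u}

/-- The support of a measure on a topological space. -/
def msupport {X : Type*} [TopologicalSpace X] [MeasurableSpace X] (μ : Measure X) : Set X :=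
  {x | ∀ U : Set X, IsOpen U → x ∈ U → μ U ≠ 0}

/-- The class of polytopes. -/
def Polytopes (n : ℕ) : Set (ConvexBody (EuclideanSpace ℝ (Fin n))) :=
  {P | ∃ s : Finset (EuclideanSpace ℝ (Fin n)),
    (P : Set (EuclideanSpace ℝ (Fin n))) = convexHull ℝ ↑s}

/-!
The support function of a support set is the one-sided directional derivative of the support
function, `h_{F(K,u)}(x) = lim_{t ↓ 0} (h_K(u + t x) - h_K(u)) / t`: the quotient is at least
`⟪y, x⟫` for every `y ∈ F(K, u)`, and at most `⟪y_t, x⟫` for a maximizer `y_t` of `⟪·, u + t x⟫`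
on `K`, whose accumulation points lie in `F(K, u)` by compactness. For `μ`-almost every `P` the
body lies in a fixed ball, so the difference quotients of `h_P` are uniformly bounded, and `h_P(v)`
is Lipschitz in `P` for the Hausdorff metric; dominated convergence then moves the derivative
under the integral `h_K = ∫ h_P dμ`.
-/

open Filter Topology

namespace ConvexBody

variable {V : Type*} [NormedAddCommGroup V] [NormedSpace ℝ V]

theorem exists_mem_dist_le_dist (K L : ConvexBody V) {y : V} (hy : y ∈ K) :
    ∃ z ∈ L, dist y z ≤ dist K L := by
  obtain ⟨z, hz, hdz⟩ := L.isCompact.exists_infDist_eq_dist L.nonempty y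
  exact ⟨z, hz, hdz ▸ Metric.infDist_le_hausdorffDist_of_mem hy hausdorffEDist_ne_top⟩

theorem norm_le_dist_zero (K : ConvexBody V) {y : V} (hy : y ∈ K) : ‖y‖ ≤ dist K 0 := by
  obtain ⟨z, hz, hyz⟩ := K.exists_mem_dist_le_dist 0 hy
  rw [← SetLike.mem_coe, coe_zero, Set.mem_zero] at hz
  simpa [hz] using hyz

theorem exists_norm_le_of_isBounded {S : Set (ConvexBody V)} (hS : Bornology.IsBounded S) :
    ∃ R, ∀ K ∈ S, ∀ y ∈ K, ‖y‖ ≤ R := by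
  obtain ⟨R, hR⟩ := hS.subset_closedBall 0
  exact ⟨R, fun K hK y hy => (K.norm_le_dist_zero hy).trans (hR hK)⟩

instance [SecondCountableTopology V] : SecondCountableTopology (ConvexBody V) :=
  let toNonemptyCompacts : ConvexBody V → TopologicalSpace.NonemptyCompacts V :=
    fun K => ⟨⟨K, K.isCompact⟩, K.nonempty⟩
  (Isometry.of_dist_eq fun _ _ => rfl : Isometry toNonemptyCompacts).isEmbedding
    |>.secondCountableTopology

end ConvexBody

theorem msupport_eq_support {X : Type*} [TopologicalSpace X] [MeasurableSpace X]
    (μ : Measure X) : msupport μ = μ.support := by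
  ext x
  simp [msupport, Measure.support_eq_forall_isOpen, pos_iff_ne_zero, forall_comm (α := IsOpen _)]

section SupportFunction

variable {n : ℕ}

local notation "E" => EuclideanSpace ℝ (Fin n)

theorem inner_le_sfnS {A : Set E} (hA : Bornology.IsBounded A) {y : E} (hy : y ∈ A) (v : E) :
    ⟪y, v⟫ ≤ sfnS A v := by
  obtain ⟨R, hR⟩ := hA.subset_closedBall 0
  refine le_csSup ⟨R * ‖v‖, Set.forall_mem_image.2 fun z hz => ?_⟩ ⟨y, hy, rfl⟩
  calc ⟪z, v⟫ ≤ ‖z‖ * ‖v‖ := real_inner_le_norm z v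
    _ ≤ R * ‖v‖ := by gcongr; simpa using hR hz

theorem sfnS_le {A : Set E} (hA : A.Nonempty) {v : E} {c : ℝ} (h : ∀ y ∈ A, ⟪y, v⟫ ≤ c) :
    sfnS A v ≤ c :=
  csSup_le (hA.image _) (Set.forall_mem_image.2 h)

theorem inner_le_sfn (K : ConvexBody E) {y : E} (hy : y ∈ K) (v : E) : ⟪y, v⟫ ≤ sfn K v :=
  inner_le_sfnS K.isBounded hy v

theorem sfn_le (K : ConvexBody E) {v : E} {c : ℝ} (h : ∀ y ∈ K, ⟪y, v⟫ ≤ c) : sfn K v ≤ c :=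
  sfnS_le K.nonempty h

theorem sfn_zero (K : ConvexBody E) : sfn K 0 = 0 := by
  simp only [sfn, sfnS, inner_zero_right, K.nonempty.image_const, csSup_singleton]

theorem suppSet_subset (K : ConvexBody E) (u : E) : suppSet K u ⊆ K := fun _ hy => hy.1

theorem suppSet_nonempty (K : ConvexBody E) (u : E) : (suppSet K u).Nonempty := by
  obtain ⟨y, hy, hmax⟩ := K.isCompact.exists_isMaxOn K.nonempty
    (continuous_id.inner (𝕜 := ℝ) (continuous_const (y := u))).continuousOn
  exact ⟨y, hy, le_antisymm (inner_le_sfn K hy u) (sfn_le K fun z hz => hmax hz)⟩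

theorem sfn_sub_sfn_le {K : ConvexBody E} {R : ℝ} (hR : ∀ y ∈ K, ‖y‖ ≤ R) (v w : E) :
    sfn K v - sfn K w ≤ R * ‖v - w‖ := by
  obtain ⟨y, hy, hyv⟩ := suppSet_nonempty K v
  calc sfn K v - sfn K w ≤ ⟪y, v⟫ - ⟪y, w⟫ := by rw [hyv]; linarith [inner_le_sfn K hy w]
    _ = ⟪y, v - w⟫ := (inner_sub_right y v w).symm
    _ ≤ ‖y‖ * ‖v - w‖ := real_inner_le_norm _ _
    _ ≤ R * ‖v - w‖ := by gcongr; exact hR y hy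

theorem abs_sfn_sub_sfn_le {K : ConvexBody E} {R : ℝ} (hR : ∀ y ∈ K, ‖y‖ ≤ R) (v w : E) :
    |sfn K v - sfn K w| ≤ R * ‖v - w‖ :=
  abs_sub_le_iff.2 ⟨sfn_sub_sfn_le hR v w, norm_sub_rev v w ▸ sfn_sub_sfn_le hR w v⟩

theorem abs_sfn_le {K : ConvexBody E} {R : ℝ} (hR : ∀ y ∈ K, ‖y‖ ≤ R) (v : E) :
    |sfn K v| ≤ R * ‖v‖ := by
  simpa [sfn_zero] using abs_sfn_sub_sfn_le hR v 0

theorem abs_sfn_diffQuot_le {K : ConvexBody E} {R : ℝ} (hR : ∀ y ∈ K, ‖y‖ ≤ R) (u x : E)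
    {t : ℝ} (ht : 0 < t) : |(sfn K (u + t • x) - sfn K u) / t| ≤ R * ‖x‖ := by
  rw [abs_div, abs_of_pos ht, div_le_iff₀ ht]
  calc |sfn K (u + t • x) - sfn K u| ≤ R * ‖(u + t • x) - u‖ := abs_sfn_sub_sfn_le hR _ _
    _ = R * ‖x‖ * t := by
      rw [add_sub_cancel_left, norm_smul, Real.norm_of_nonneg ht.le]; ring

theorem sfn_le_sfn_add_dist (K L : ConvexBody E) (v : E) :
    sfn K v ≤ sfn L v + ‖v‖ * dist K L := by
  refine sfn_le K fun y hy => ?_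
  obtain ⟨z, hz, hyz⟩ := K.exists_mem_dist_le_dist L hy
  calc ⟪y, v⟫ = ⟪z, v⟫ + ⟪y - z, v⟫ := by rw [inner_sub_left]; ring
    _ ≤ sfn L v + ‖y - z‖ * ‖v‖ := add_le_add (inner_le_sfn L hz v) (real_inner_le_norm _ _)
    _ ≤ sfn L v + ‖v‖ * dist K L := by rw [← dist_eq_norm, mul_comm]; gcongr

theorem lipschitzWith_sfn (v : E) : LipschitzWith ‖v‖₊ fun K : ConvexBody E => sfn K v :=
  LipschitzWith.of_le_add_mul _ fun K L => sfn_le_sfn_add_dist K L v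

theorem sfnS_suppSet_le_diffQuot (K : ConvexBody E) (u x : E) {t : ℝ} (ht : 0 < t) :
    sfnS (suppSet K u) x ≤ (sfn K (u + t • x) - sfn K u) / t := by
  refine sfnS_le (suppSet_nonempty K u) fun z ⟨hzK, hzu⟩ => ?_
  have := inner_le_sfn K hzK (u + t • x)
  rw [inner_add_right, real_inner_smul_right, hzu] at this
  rw [le_div_iff₀ ht]
  linarith

theorem diffQuot_le_inner {K : ConvexBody E} {u x y : E} {t : ℝ} (ht : 0 < t)
    (hy : y ∈ suppSet K (u + t • x)) : (sfn K (u + t • x) - sfn K u) / t ≤ ⟪y, x⟫ := by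
  rw [div_le_iff₀ ht, ← hy.2, inner_add_right, real_inner_smul_right]
  linarith [inner_le_sfn K hy.1 u]

theorem mem_suppSet_of_tendsto {ι : Type*} {l : Filter ι} [l.NeBot] {K : ConvexBody E}
    {v y : ι → E} {u y₀ : E} (hv : Tendsto v l (𝓝 u)) (hy : Tendsto y l (𝓝 y₀))
    (hmem : ∀ᶠ i in l, y i ∈ suppSet K (v i)) : y₀ ∈ suppSet K u := by
  have hy₀ : y₀ ∈ K := K.isClosed.mem_of_tendsto hy (hmem.mono fun _ h => h.1)
  refine ⟨hy₀, le_antisymm (inner_le_sfn K hy₀ u) (sfn_le K fun z hz => ?_)⟩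
  exact le_of_tendsto_of_tendsto (tendsto_const_nhds.inner hv) (hy.inner hv)
    (hmem.mono fun i h => (inner_le_sfn K hz (v i)).trans_eq h.2.symm)

theorem tendsto_sfn_diffQuot (K : ConvexBody E) (u x : E) :
    Tendsto (fun t => (sfn K (u + t • x) - sfn K u) / t) (𝓝[>] 0)
      (𝓝 (sfnS (suppSet K u) x)) := by
  refine tendsto_of_seq_tendsto fun t ht => tendsto_of_subseq_tendsto fun ns hns => ?_
  choose y hy using fun k => suppSet_nonempty K (u + t (ns k) • x)
  obtain ⟨y₀, -, ms, hms, hy₀⟩ := K.isCompact.tendsto_subseq fun k => (hy k).1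
  set s := fun j => t (ns (ms j))
  have hs : Tendsto s atTop (𝓝[>] 0) := ht.comp (hns.comp hms.tendsto_atTop)
  have hs_pos : ∀ᶠ j in atTop, 0 < s j := hs.eventually self_mem_nhdsWithin
  have hv : Tendsto (fun j => u + s j • x) atTop (𝓝 u) := by
    simpa using tendsto_const_nhds.add ((tendsto_nhds_of_tendsto_nhdsWithin hs).smul_const x)
  have hmem : y₀ ∈ suppSet K u :=
    mem_suppSet_of_tendsto hv hy₀ (Eventually.of_forall fun j => hy (ms j))
  have hx : Tendsto (fun j => ⟪y (ms j), x⟫) atTop (𝓝 ⟪y₀, x⟫) := hy₀.inner tendsto_const_nhds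
  have hlow := hs_pos.mono fun j hj => sfnS_suppSet_le_diffQuot K u x hj
  have hup := hs_pos.mono fun j hj => diffQuot_le_inner hj (hy (ms j))
  have heq : ⟪y₀, x⟫ = sfnS (suppSet K u) x :=
    le_antisymm (inner_le_sfnS (K.isBounded.subset (suppSet_subset K u)) hmem x)
      (ge_of_tendsto hx ((hlow.and hup).mono fun _ h => h.1.trans h.2))
  exact ⟨ms, tendsto_of_tendsto_of_tendsto_of_le_of_le' tendsto_const_nhds (heq ▸ hx) hlow hup⟩

theorem integrable_sfn [MeasurableSpace (ConvexBody E)] [OpensMeasurableSpace (ConvexBody E)]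
    {μ : Measure (ConvexBody E)} [IsFiniteMeasure μ] {R : ℝ} (hR : ∀ᵐ K ∂μ, ∀ y ∈ K, ‖y‖ ≤ R)
    (v : E) : Integrable (fun K => sfn K v) μ :=
  (integrable_const (R * ‖v‖)).mono' (lipschitzWith_sfn v).continuous.aestronglyMeasurable
    (hR.mono fun _ hK => abs_sfn_le hK v)

end SupportFunction

theorem supportSet_of_macroid {n : ℕ}
    [MeasurableSpace (ConvexBody (EuclideanSpace ℝ (Fin n)))]
    [BorelSpace (ConvexBody (EuclideanSpace ℝ (Fin n)))]
    (μ : Measure (ConvexBody (EuclideanSpace ℝ (Fin n)))) [IsProbabilityMeasure μ]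
    (hconc : μ (Polytopes n)ᶜ = 0)
    (hbd : Bornology.IsBounded (Polytopes n ∩ msupport μ))
    (K : ConvexBody (EuclideanSpace ℝ (Fin n)))
    (hK : ∀ u, sfn K u = ∫ P, sfn P u ∂μ) :
    ∀ u : EuclideanSpace ℝ (Fin n), ‖u‖ = 1 →
      ∀ x, sfnS (suppSet K u) x = ∫ P, sfnS (suppSet P u) x ∂μ := by
  intro u _ x
  obtain ⟨R, hR⟩ := ConvexBody.exists_norm_le_of_isBounded hbd
  have hbound : ∀ᵐ P ∂μ, ∀ y ∈ P, ‖y‖ ≤ R := by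
    have hsupp : msupport μ ∈ ae μ := msupport_eq_support μ ▸ Measure.support_mem_ae
    filter_upwards [mem_ae_iff.2 hconc, hsupp] with P hP hP' using hR P ⟨hP, hP'⟩
  have hlim : Tendsto (fun t => ∫ P, (sfn P (u + t • x) - sfn P u) / t ∂μ) (𝓝[>] 0)
      (𝓝 (∫ P, sfnS (suppSet P u) x ∂μ)) :=
    tendsto_integral_filter_of_dominated_convergence (fun _ => R * ‖x‖)
      (Eventually.of_forall fun t => (((lipschitzWith_sfn _).continuous.sub
        (lipschitzWith_sfn u).continuous).div_const t).aestronglyMeasurable)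
      (eventually_mem_nhdsWithin.mono fun _ ht =>
        hbound.mono fun _ hP => abs_sfn_diffQuot_le hP u x ht)
      (integrable_const _) (Eventually.of_forall fun P => tendsto_sfn_diffQuot P u x)
  have hmean : ∀ t, ∫ P, (sfn P (u + t • x) - sfn P u) / t ∂μ
      = (sfn K (u + t • x) - sfn K u) / t := fun t => by
    rw [integral_div, integral_sub (integrable_sfn hbound _) (integrable_sfn hbound _), hK, hK]
  exact tendsto_nhds_unique (tendsto_sfn_diffQuot K u x) (by simpa only [hmean] using hlim)
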